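/- Let χ be a nontrivial additive character of F_q and N_0 = {m ∈ F_q^d : all coordinates nonzero}. Then for every g : F_q^d → ℂ, ‖g ∗ ((dσ_j)^∨ 1_{N_0})‖_{ℓ^2(F_q^d)} ≤ C q ‖g‖_{ℓ^2(F_q^d)} for a constant C depending only on d, where (dσ_j)^∨(m) = (q-1)^{-(d-1)} Σ_{x ∈ H_j} χ(m·x). -/

import Mathlib

/-!
Convolution with `h = (dσ_j)^∨ 1_{N_0}` multiplies Fourier transforms, so by Plancherel the
operator norm on `ℓ²` is at most `sup_ξ |ĥ(ξ)|`. Summing over `n ∈ N_0` first,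
`ĥ(ξ) = (q-1)^{-(d-1)} ∑_{x ∈ H_j} ∏_i ∑_{a ≠ 0} χ(a (x_i + ξ_i))`, and each inner sum has
modulus `q - 1` if `x_i = -ξ_i` and `1` otherwise. A point of `H_j` is determined by all but one
of its coordinates, so these weights sum over `H_j` to at most `(q-1) (2(q-1))^{d-1}`, whence
`|ĥ(ξ)| ≤ 2^{d-1} q`.
-/

open Finset

lemma Complex.norm_natCast_sub_one {n : ℕ} (hn : 1 ≤ n) : ‖(n : ℂ) - 1‖ = n - 1 := by
  rw [← Nat.cast_pred hn, Complex.norm_natCast, Nat.cast_pred hn]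

namespace AddChar

lemma map_sum_eq_prod {A M κ : Type*} [AddCommMonoid A] [CommMonoid M] (ψ : AddChar A M)
    (s : Finset κ) (f : κ → A) : ψ (∑ k ∈ s, f k) = ∏ k ∈ s, ψ (f k) :=
  map_prod ψ.toMonoidHom (fun k => Multiplicative.ofAdd (f k)) s

variable {R R' ι : Type*} [Fintype ι] [DecidableEq ι]

lemma sum_piFinset_dotProduct [CommSemiring R] [CommSemiring R'] (ψ : AddChar R R')
    (t : ι → Finset R) (y : ι → R) :
    ∑ n ∈ Fintype.piFinset t, ψ (n ⬝ᵥ y) = ∏ i, ∑ a ∈ t i, ψ (a * y i) := by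
  simp only [prod_univ_sum, dotProduct, map_sum_eq_prod]

variable [CommRing R] [Fintype R] [DecidableEq R] [CommRing R'] [IsDomain R'] {ψ : AddChar R R'}

lemma sum_dotProduct_eq_ite (hψ : ψ.IsPrimitive) (y : ι → R) :
    ∑ n, ψ (n ⬝ᵥ y) = if y = 0 then (Fintype.card R : R') ^ Fintype.card ι else 0 := by
  rw [← Fintype.piFinset_univ, sum_piFinset_dotProduct]
  simp only [sum_mulShift _ hψ, Nat.cast_ite, Nat.cast_zero]
  split_ifs with hy
  · simp [hy]
  · obtain ⟨i, hi⟩ := Function.ne_iff.mp hy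
    exact prod_eq_zero (mem_univ i) (if_neg hi)

lemma sum_erase_zero_mulShift (hψ : ψ.IsPrimitive) (c : R) :
    ∑ a ∈ univ.erase 0, ψ (a * c) = (if c = 0 then (Fintype.card R : R') else 0) - 1 := by
  rw [sum_erase_eq_sub (mem_univ 0), sum_mulShift c hψ, zero_mul, map_zero_eq_one, Nat.cast_ite,
    Nat.cast_zero]

lemma norm_sum_erase_zero_mulShift {ψ : AddChar R ℂ} (hψ : ψ.IsPrimitive) (c : R) :
    ‖∑ a ∈ univ.erase 0, ψ (a * c)‖ = if c = 0 then (Fintype.card R : ℝ) - 1 else 1 := by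
  rw [sum_erase_zero_mulShift hψ]
  split_ifs
  · exact Complex.norm_natCast_sub_one Fintype.card_pos
  · simp

end AddChar

section DFT

variable {R ι : Type*} [CommRing R] [Fintype R] [Fintype ι] [DecidableEq ι]

def dotDFT (ψ : AddChar R ℂ) (f : (ι → R) → ℂ) (ξ : ι → R) : ℂ :=
  ∑ m, f m * ψ (m ⬝ᵥ ξ)

lemma dotDFT_conv (ψ : AddChar R ℂ) (g h : (ι → R) → ℂ) (ξ : ι → R) :
    dotDFT ψ (fun m => ∑ n, g (m - n) * h n) ξ = dotDFT ψ g ξ * dotDFT ψ h ξ := by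
  rw [dotDFT, dotDFT, dotDFT, sum_mul_sum, sum_comm]
  simp_rw [sum_mul]
  rw [sum_comm]
  refine sum_congr rfl fun n _ => Fintype.sum_equiv (Equiv.subRight n) _ _ fun m => ?_
  have hsplit : ψ (m ⬝ᵥ ξ) = ψ ((m - n) ⬝ᵥ ξ) * ψ (n ⬝ᵥ ξ) := by
    rw [← AddChar.map_add_eq_mul, ← add_dotProduct, sub_add_cancel]
  rw [Equiv.subRight_apply, hsplit]
  ring

lemma dotDFT_indicator_const_mul (ψ : AddChar R ℂ) (s : Set (ι → R)) (c : ℂ)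
    (f : (ι → R) → ℂ) (ξ : ι → R) :
    dotDFT ψ (s.indicator fun v => c * f v) ξ = c * dotDFT ψ (s.indicator f) ξ := by
  simp only [dotDFT, Set.indicator_const_mul, mul_sum, mul_assoc]

variable [DecidableEq R]

theorem sum_norm_dotDFT_sq {ψ : AddChar R ℂ} (hψ : ψ.IsPrimitive) (f : (ι → R) → ℂ) :
    ∑ ξ, ‖dotDFT ψ f ξ‖ ^ 2 = (Fintype.card R : ℝ) ^ Fintype.card ι * ∑ m, ‖f m‖ ^ 2 := by
  apply Complex.ofReal_injective
  push_cast
  simp only [← Complex.mul_conj']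
  have hexpand : ∀ ξ, dotDFT ψ f ξ * (starRingEnd ℂ) (dotDFT ψ f ξ)
      = ∑ m, ∑ m' : ι → R, f m * (starRingEnd ℂ) (f m') * ψ (ξ ⬝ᵥ (m - m')) := by
    intro ξ
    rw [dotDFT, map_sum, sum_mul_sum]
    refine sum_congr rfl fun m _ => sum_congr rfl fun m' _ => ?_
    rw [map_mul, ← AddChar.map_neg_eq_conj, dotProduct_sub, sub_eq_add_neg,
      AddChar.map_add_eq_mul, dotProduct_comm ξ, dotProduct_comm ξ, ← neg_dotProduct]
    ring
  calc ∑ ξ, dotDFT ψ f ξ * (starRingEnd ℂ) (dotDFT ψ f ξ)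
      = ∑ m, ∑ m' : ι → R, f m * (starRingEnd ℂ) (f m') * ∑ ξ, ψ (ξ ⬝ᵥ (m - m')) := by
        simp only [hexpand, mul_sum]
        rw [sum_comm]
        exact sum_congr rfl fun m _ => sum_comm
    _ = (Fintype.card R : ℂ) ^ Fintype.card ι * ∑ m, f m * (starRingEnd ℂ) (f m) := by
        simp only [AddChar.sum_dotProduct_eq_ite hψ, sub_eq_zero, mul_ite, mul_zero,
          sum_ite_eq, mem_univ, if_true, mul_sum]
        exact sum_congr rfl fun m _ => mul_comm _ _

theorem sqrt_sum_norm_conv_sq_le {ψ : AddChar R ℂ} (hψ : ψ.IsPrimitive) (g h : (ι → R) → ℂ)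
    {B : ℝ} (hB : ∀ ξ, ‖dotDFT ψ h ξ‖ ≤ B) :
    √(∑ m, ‖∑ n, g (m - n) * h n‖ ^ 2) ≤ B * √(∑ n, ‖g n‖ ^ 2) := by
  have hB₀ : 0 ≤ B := (norm_nonneg _).trans (hB 0)
  have hN : (0 : ℝ) < (Fintype.card R : ℝ) ^ Fintype.card ι := by
    have := Fintype.card_pos (α := R); positivity
  have hsq : ∑ m, ‖∑ n, g (m - n) * h n‖ ^ 2 ≤ B ^ 2 * ∑ n, ‖g n‖ ^ 2 := by
    refine le_of_mul_le_mul_left ?_ hN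
    rw [← sum_norm_dotDFT_sq hψ, mul_left_comm, ← sum_norm_dotDFT_sq hψ, mul_sum]
    refine sum_le_sum fun ξ _ => ?_
    rw [dotDFT_conv, norm_mul, mul_pow, mul_comm]
    gcongr
    exact hB ξ
  calc √(∑ m, ‖∑ n, g (m - n) * h n‖ ^ 2) ≤ √(B ^ 2 * ∑ n, ‖g n‖ ^ 2) := Real.sqrt_le_sqrt hsq
    _ = B * √(∑ n, ‖g n‖ ^ 2) := by rw [Real.sqrt_mul (sq_nonneg B), Real.sqrt_sq hB₀]

lemma dotDFT_indicator_sum_char (ψ : AddChar R ℂ) (S : Finset (ι → R)) (ξ : ι → R) :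
    dotDFT ψ (Set.indicator {v | ∀ i, v i ≠ 0} fun v => ∑ x ∈ S, ψ (v ⬝ᵥ x)) ξ
      = ∑ x ∈ S, ∏ i, ∑ a ∈ univ.erase 0, ψ (a * (x i + ξ i)) := by
  have hN₀ : univ.filter (fun v : ι → R => ∀ i, v i ≠ 0)
      = Fintype.piFinset fun _ => univ.erase 0 := by
    ext; simp
  simp only [dotDFT, Set.indicator_apply, Set.mem_ofPred_eq, ite_mul, zero_mul]
  rw [← sum_filter, hN₀]
  simp_rw [sum_mul]
  rw [sum_comm]
  refine sum_congr rfl fun x _ => ?_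
  rw [← AddChar.sum_piFinset_dotProduct]
  refine sum_congr rfl fun n _ => ?_
  rw [← AddChar.map_add_eq_mul, ← dotProduct_add]
  rfl

end DFT

lemma sum_erase_zero_ite_add_eq_zero_le {R : Type*} [Ring R] [Fintype R] [DecidableEq R]
    (b : R) :
    ∑ a ∈ univ.erase 0, (if a + b = 0 then (Fintype.card R : ℝ) - 1 else 1)
      ≤ 2 * ((Fintype.card R : ℝ) - 1) := by
  have hq : (1 : ℝ) ≤ Fintype.card R := by exact_mod_cast Fintype.card_pos
  calc ∑ a ∈ univ.erase 0, (if a + b = 0 then (Fintype.card R : ℝ) - 1 else 1)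
      ≤ ∑ a, (if a + b = 0 then (Fintype.card R : ℝ) - 1 else 1) :=
        sum_le_sum_of_subset_of_nonneg (erase_subset 0 univ) fun a _ _ => by
          split_ifs <;> linarith
    _ = ∑ a : R, ((if a = -b then (Fintype.card R : ℝ) - 2 else 0) + 1) := by
        refine sum_congr rfl fun a _ => ?_
        simp only [add_eq_zero_iff_eq_neg]
        split_ifs <;> ring
    _ = 2 * ((Fintype.card R : ℝ) - 1) := by
        rw [sum_add_distrib, sum_ite_eq', if_pos (mem_univ _), sum_const, card_univ, nsmul_one]
        ring

section Hyperbola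

variable {F ι : Type*} [Field F] [Fintype F] [DecidableEq F] [Fintype ι] [DecidableEq ι]

def hyperbola (j : F) : Finset (ι → F) := univ.filter fun x => ∏ i, x i = j

variable {j : F}

lemma ne_zero_of_mem_hyperbola (hj : j ≠ 0) {x : ι → F} (hx : x ∈ hyperbola j) (i : ι) :
    x i ≠ 0 := by
  rw [hyperbola, mem_filter] at hx
  exact (prod_ne_zero_iff.mp (hx.2 ▸ hj)) i (mem_univ i)

lemma injOn_restrict_hyperbola (hj : j ≠ 0) (i₀ : ι) :
    Set.InjOn (fun (x : ι → F) (i : {i // i ≠ i₀}) => x i) ↑(hyperbola j : Finset (ι → F)) := by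
  intro x hx y hy hxy
  have hrest : ∀ i, i ≠ i₀ → x i = y i := fun i hi => congrFun hxy ⟨i, hi⟩
  have hx₀ : x i₀ = y i₀ := by
    have hprod := (mem_filter.mp hx).2.trans (mem_filter.mp hy).2.symm
    rw [← mul_prod_erase univ x (mem_univ i₀), ← mul_prod_erase univ y (mem_univ i₀),
      prod_congr rfl fun i hi => hrest i (ne_of_mem_erase hi)] at hprod
    exact mul_right_cancel₀
      (prod_ne_zero_iff.mpr fun i _ => ne_zero_of_mem_hyperbola hj hy i) hprod
  funext i
  by_cases hi : i = i₀
  · rw [hi, hx₀]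
  · exact hrest i hi

theorem sum_hyperbola_prod_le (hj : j ≠ 0) {w : ι → F → ℝ} (hw : ∀ i a, 0 ≤ w i a) (i₀ : ι)
    {M : ℝ} (hM : ∀ a, w i₀ a ≤ M) :
    ∑ x ∈ hyperbola j, ∏ i, w i (x i) ≤ M * ∏ i : {i // i ≠ i₀}, ∑ a ∈ univ.erase 0, w i a := by
  set restrict := fun (x : ι → F) (i : {i // i ≠ i₀}) => x i
  have hmaps : (hyperbola j).image restrict ⊆ Fintype.piFinset fun _ => univ.erase 0 := by
    intro y hy
    obtain ⟨x, hx, rfl⟩ := mem_image.mp hy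
    exact Fintype.mem_piFinset.mpr fun i =>
      mem_erase.mpr ⟨ne_zero_of_mem_hyperbola hj hx i, mem_univ _⟩
  have hM₀ : 0 ≤ M := (hw i₀ 0).trans (hM 0)
  calc ∑ x ∈ hyperbola j, ∏ i, w i (x i)
      = ∑ x ∈ hyperbola j, w i₀ (x i₀) * ∏ i : {i // i ≠ i₀}, w i (restrict x i) :=
        sum_congr rfl fun x _ => Fintype.prod_eq_mul_prod_subtype_ne _ i₀
    _ ≤ ∑ x ∈ hyperbola j, M * ∏ i : {i // i ≠ i₀}, w i (restrict x i) :=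
        sum_le_sum fun x _ => mul_le_mul_of_nonneg_right (hM _) (prod_nonneg fun i _ => hw _ _)
    _ = M * ∑ y ∈ (hyperbola j).image restrict, ∏ i : {i // i ≠ i₀}, w i (y i) := by
        rw [sum_image (injOn_restrict_hyperbola hj i₀), mul_sum]
    _ ≤ M * ∑ y ∈ Fintype.piFinset (fun _ => univ.erase 0), ∏ i : {i // i ≠ i₀}, w i (y i) :=
        mul_le_mul_of_nonneg_left (sum_le_sum_of_subset_of_nonneg hmaps
          fun y _ _ => prod_nonneg fun i _ => hw _ _) hM₀
    _ = M * ∏ i : {i // i ≠ i₀}, ∑ a ∈ univ.erase 0, w i a := by rw [prod_univ_sum]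

theorem norm_dotDFT_hyperbola_kernel_le {ψ : AddChar F ℂ} (hψ : ψ ≠ 1) (hj : j ≠ 0) (i₀ : ι)
    (ξ : ι → F) :
    ‖dotDFT ψ (Set.indicator {v | ∀ i, v i ≠ 0} fun v => ∑ x ∈ hyperbola j, ψ (v ⬝ᵥ x)) ξ‖
      ≤ ((Fintype.card F : ℝ) - 1) * (2 * ((Fintype.card F : ℝ) - 1)) ^ (Fintype.card ι - 1) := by
  have hq : (2 : ℝ) ≤ Fintype.card F := by exact_mod_cast Fintype.one_lt_card (α := F)
  set q : ℝ := (Fintype.card F : ℝ)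
  set w : ι → F → ℝ := fun i a => if a + ξ i = 0 then q - 1 else 1
  have hw : ∀ i a, 0 ≤ w i a := fun i a => by dsimp only [w]; split_ifs <;> linarith
  have hw₀ : ∀ a, w i₀ a ≤ q - 1 := fun a => by dsimp only [w]; split_ifs <;> linarith
  rw [dotDFT_indicator_sum_char]
  calc ‖∑ x ∈ hyperbola j, ∏ i, ∑ a ∈ univ.erase 0, ψ (a * (x i + ξ i))‖
      ≤ ∑ x ∈ hyperbola j, ∏ i, w i (x i) := by
        refine (norm_sum_le _ _).trans_eq (sum_congr rfl fun x _ => ?_)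
        simp only [norm_prod, AddChar.norm_sum_erase_zero_mulShift (.of_ne_one hψ), w, q]
    _ ≤ (q - 1) * ∏ i : {i // i ≠ i₀}, ∑ a ∈ univ.erase 0, w i a :=
        sum_hyperbola_prod_le hj hw i₀ hw₀
    _ ≤ (q - 1) * ∏ _i : {i // i ≠ i₀}, 2 * (q - 1) :=
        mul_le_mul_of_nonneg_left (prod_le_prod (fun i _ => sum_nonneg fun a _ => hw i a)
          fun i _ => sum_erase_zero_ite_add_eq_zero_le (ξ i)) (by linarith)
    _ = (q - 1) * (2 * (q - 1)) ^ (Fintype.card ι - 1) := by simp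

end Hyperbola

/-- `‖g ∗ ((dσ_j)^∨ 1_{N_0})‖_{ℓ²} ≤ C q ‖g‖_{ℓ²}` with `C` depending only
on `d`. -/
theorem conv_N0_l2_bound (d : ℕ) (hd : 1 ≤ d) :
    ∃ C : ℝ, 0 < C ∧
      ∀ (F : Type) [Field F] [Fintype F] [DecidableEq F],
        Odd (Fintype.card F) →
        ∀ (χ : AddChar F ℂ), χ ≠ 1 →
        ∀ j : F, j ≠ 0 →
        ∀ g : (Fin d → F) → ℂ,
          Real.sqrt (∑ m : Fin d → F,
              ‖∑ n : Fin d → F, g (m - n) *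
                (Set.indicator {v : Fin d → F | ∀ i, v i ≠ 0}
                  (fun v => (((Fintype.card F : ℂ) - 1) ^ (d - 1))⁻¹ *
                    ∑ x ∈ Finset.univ.filter (fun x : Fin d → F => ∏ i, x i = j),
                      χ (∑ i, v i * x i)) n)‖ ^ 2)
            ≤ C * Fintype.card F *
                Real.sqrt (∑ n : Fin d → F, ‖g n‖ ^ 2) := by
  refine ⟨2 ^ (d - 1), by positivity, fun F _ _ _ _ χ hχ j hj g => ?_⟩
  refine (sqrt_sum_norm_conv_sq_le (B := 2 ^ (d - 1) * Fintype.card F) (.of_ne_one hχ) g _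
    fun ξ => ?_).trans_eq (by ring)
  have hkernel := norm_dotDFT_hyperbola_kernel_le hχ hj (⟨0, hd⟩ : Fin d) ξ
  rw [Fintype.card_fin] at hkernel
  have hq : (1 : ℝ) < Fintype.card F := by exact_mod_cast Fintype.one_lt_card (α := F)
  have hq₁ : (Fintype.card F : ℝ) - 1 ≠ 0 := by linarith
  rw [dotDFT_indicator_const_mul, norm_mul, norm_inv, norm_pow,
    Complex.norm_natCast_sub_one Fintype.card_pos]
  calc (((Fintype.card F : ℝ) - 1) ^ (d - 1))⁻¹ * ‖dotDFT χ _ ξ‖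
      ≤ (((Fintype.card F : ℝ) - 1) ^ (d - 1))⁻¹
          * (((Fintype.card F : ℝ) - 1) * (2 * ((Fintype.card F : ℝ) - 1)) ^ (d - 1)) :=
        mul_le_mul_of_nonneg_left hkernel (by positivity)
    _ = 2 ^ (d - 1) * ((Fintype.card F : ℝ) - 1) := by
        rw [mul_pow]
        field_simp
    _ ≤ 2 ^ (d - 1) * Fintype.card F := by gcongr; linarith
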